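/- arXiv:1504.02961 — 5 statements merged into one kernel-verified Lean document; each statement's English description precedes it below -/
import Mathlib

section
/- For parameters α > β > 0, sup_{x∈ℝ} |Φ(αx) − Φ(βx)| ≤ (1/√(2πe)) · (α−β)/β, where Φ is the standard normal distribution function. Consequently, for 0 < σ < v, the Kolmogorov distance between the distribution functions of N(0,σ²) and N(0,v²) is at most (1/√(2πe)) · (v−σ)/σ. -/
open Real MeasureTheory Set

noncomputable def stdGaussianDensity (t : ℝ) : ℝ :=
  (Real.sqrt (2 * Real.pi))⁻¹ * Real.exp (-t ^ 2 / 2)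

noncomputable def stdNormalCDF (x : ℝ) : ℝ :=
  ∫ t in Set.Iic x, stdGaussianDensity t

lemma density_nonneg (t : ℝ) : 0 ≤ stdGaussianDensity t := by
  unfold stdGaussianDensity
  positivity

lemma density_integrable : Integrable stdGaussianDensity := by
  have h : Integrable fun t : ℝ => Real.exp (-(1/2) * t ^ 2) :=
    integrable_exp_neg_mul_sq (by norm_num)
  have : stdGaussianDensity = fun t => (Real.sqrt (2 * Real.pi))⁻¹ * Real.exp (-(1/2) * t ^ 2) := by
    funext t; unfold stdGaussianDensity; ring_nf
  rw [this]
  exact h.const_mul _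

lemma density_anti {s t : ℝ} (h : s ^ 2 ≤ t ^ 2) :
    stdGaussianDensity t ≤ stdGaussianDensity s := by
  unfold stdGaussianDensity
  have : Real.exp (-t ^ 2 / 2) ≤ Real.exp (-s ^ 2 / 2) := by
    apply Real.exp_le_exp.2; linarith
  have h2 : (0:ℝ) ≤ (Real.sqrt (2 * Real.pi))⁻¹ := by positivity
  exact mul_le_mul_of_nonneg_left this h2

lemma cdf_sub {a b : ℝ} (h : b ≤ a) :
    stdNormalCDF a - stdNormalCDF b = ∫ t in Ioc b a, stdGaussianDensity t := by
  unfold stdNormalCDF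
  rw [intervalIntegral.integral_Iic_sub_Iic density_integrable.integrableOn
      density_integrable.integrableOn, intervalIntegral.integral_of_le h]

lemma const_inv_eq : (Real.sqrt (2 * Real.pi * Real.exp 1))⁻¹
    = (Real.sqrt (2 * Real.pi))⁻¹ * Real.exp (-(1/2)) := by
  rw [Real.sqrt_mul (by positivity), mul_inv]
  congr 1
  rw [show Real.exp 1 = Real.exp (1/2) * Real.exp (1/2) by
        rw [← Real.exp_add]; norm_num]
  rw [Real.sqrt_mul_self (Real.exp_pos _).le, ← Real.exp_neg]

lemma key {y : ℝ} (hy : 0 ≤ y) :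
    y * stdGaussianDensity y ≤ (Real.sqrt (2 * Real.pi * Real.exp 1))⁻¹ := by
  rw [const_inv_eq]
  unfold stdGaussianDensity
  rw [mul_comm y _, mul_assoc]
  apply mul_le_mul_of_nonneg_left _ (by positivity)
  rcases eq_or_lt_of_le hy with rfl | hy'
  · simp [Real.exp_pos, (Real.exp_pos _).le]
  · have hlog : Real.log y ≤ y - 1 := Real.log_le_sub_one_of_pos hy'
    calc Real.exp (-y ^ 2 / 2) * y = Real.exp (Real.log y + (-y ^ 2 / 2)) := by
          rw [Real.exp_add, Real.exp_log hy']; ring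
      _ ≤ Real.exp (-(1/2)) := by
          apply Real.exp_le_exp.2; nlinarith [sq_nonneg (y-1)]

lemma pointwise (α β x : ℝ) (hβ : 0 < β) (hβα : β < α) :
    |stdNormalCDF (α * x) - stdNormalCDF (β * x)|
      ≤ (Real.sqrt (2 * Real.pi * Real.exp 1))⁻¹ * ((α - β) / β) := by
  have hC : (0:ℝ) ≤ (Real.sqrt (2 * Real.pi * Real.exp 1))⁻¹ := by positivity
  rcases le_or_gt 0 x with hx | hx
  · -- x ≥ 0 : β x ≤ α x
    have hba : β * x ≤ α * x := by nlinarith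
    rw [cdf_sub hba]
    have hnn : 0 ≤ ∫ t in Ioc (β*x) (α*x), stdGaussianDensity t :=
      setIntegral_nonneg measurableSet_Ioc fun t _ => density_nonneg t
    rw [abs_of_nonneg hnn]
    have hmono : (∫ t in Ioc (β*x) (α*x), stdGaussianDensity t)
        ≤ ∫ _ in Ioc (β*x) (α*x), stdGaussianDensity (β*x) := by
      apply setIntegral_mono_on density_integrable.integrableOn
        (integrableOn_const measure_Ioc_lt_top.ne) measurableSet_Ioc
      intro t ht
      exact density_anti (by nlinarith [ht.1.le, mul_nonneg hβ.le hx])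
    have hconst : (∫ _ in Ioc (β*x) (α*x), stdGaussianDensity (β*x))
        = (α*x - β*x) * stdGaussianDensity (β*x) := by
      rw [setIntegral_const, measureReal_def, Real.volume_Ioc, smul_eq_mul,
        ENNReal.toReal_ofReal (by linarith)]
    have hkey : β * x * stdGaussianDensity (β*x)
        ≤ (Real.sqrt (2 * Real.pi * Real.exp 1))⁻¹ := key (by positivity)
    calc (∫ t in Ioc (β*x) (α*x), stdGaussianDensity t)
        ≤ (α*x - β*x) * stdGaussianDensity (β*x) := hmono.trans_eq hconst
      _ = ((α - β)/β) * (β * x * stdGaussianDensity (β*x)) := by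
          field_simp
      _ ≤ ((α - β)/β) * (Real.sqrt (2 * Real.pi * Real.exp 1))⁻¹ := by
          exact mul_le_mul_of_nonneg_left hkey (div_nonneg (by linarith) hβ.le)
      _ = (Real.sqrt (2 * Real.pi * Real.exp 1))⁻¹ * ((α - β)/β) := mul_comm _ _
  · -- x < 0 : α x < β x
    have hba : α * x ≤ β * x := by nlinarith
    rw [abs_sub_comm, cdf_sub hba]
    have hnn : 0 ≤ ∫ t in Ioc (α*x) (β*x), stdGaussianDensity t :=
      setIntegral_nonneg measurableSet_Ioc fun t _ => density_nonneg t
    rw [abs_of_nonneg hnn]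
    have hmono : (∫ t in Ioc (α*x) (β*x), stdGaussianDensity t)
        ≤ ∫ _ in Ioc (α*x) (β*x), stdGaussianDensity (β*x) := by
      apply setIntegral_mono_on density_integrable.integrableOn
        (integrableOn_const measure_Ioc_lt_top.ne) measurableSet_Ioc
      intro t ht
      have htb : t ≤ β * x := ht.2
      have hbx : β * x ≤ 0 := by nlinarith
      exact density_anti (by nlinarith)
    have hconst : (∫ _ in Ioc (α*x) (β*x), stdGaussianDensity (β*x))
        = (β*x - α*x) * stdGaussianDensity (β*x) := by
      rw [setIntegral_const, measureReal_def, Real.volume_Ioc, smul_eq_mul,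
        ENNReal.toReal_ofReal (by linarith)]
    have heven : stdGaussianDensity (β*x) = stdGaussianDensity (-(β*x)) := by
      unfold stdGaussianDensity; ring_nf
    have hkey : (-(β * x)) * stdGaussianDensity (-(β*x))
        ≤ (Real.sqrt (2 * Real.pi * Real.exp 1))⁻¹ := key (by nlinarith)
    calc (∫ t in Ioc (α*x) (β*x), stdGaussianDensity t)
        ≤ (β*x - α*x) * stdGaussianDensity (β*x) := hmono.trans_eq hconst
      _ = ((α - β)/β) * ((-(β * x)) * stdGaussianDensity (-(β*x))) := by
          rw [← heven]; field_simp; ring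
      _ ≤ ((α - β)/β) * (Real.sqrt (2 * Real.pi * Real.exp 1))⁻¹ := by
          exact mul_le_mul_of_nonneg_left hkey (div_nonneg (by linarith) hβ.le)
      _ = (Real.sqrt (2 * Real.pi * Real.exp 1))⁻¹ * ((α - β)/β) := mul_comm _ _

theorem stmt_1 :
    (∀ α β : ℝ, 0 < β → β < α →
      (⨆ x : ℝ, |stdNormalCDF (α * x) - stdNormalCDF (β * x)|)
        ≤ (Real.sqrt (2 * Real.pi * Real.exp 1))⁻¹ * ((α - β) / β)) ∧
    (∀ σ v : ℝ, 0 < σ → σ < v →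
      (⨆ x : ℝ, |stdNormalCDF (x / σ) - stdNormalCDF (x / v)|)
        ≤ (Real.sqrt (2 * Real.pi * Real.exp 1))⁻¹ * ((v - σ) / σ)) := by
  constructor
  · intro α β hβ hβα
    apply Real.iSup_le (fun x => pointwise α β x hβ hβα)
    exact mul_nonneg (by positivity) (div_nonneg (by linarith) hβ.le)
  · intro σ v hσ hσv
    have hv : 0 < v := hσ.trans hσv
    have h1 : (1:ℝ)/v < 1/σ := by
      apply div_lt_div_of_pos_left one_pos hσ hσv
    have heq : ∀ x : ℝ, |stdNormalCDF (x / σ) - stdNormalCDF (x / v)|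
        = |stdNormalCDF ((1/σ) * x) - stdNormalCDF ((1/v) * x)| := by
      intro x; rw [one_div, one_div, inv_mul_eq_div, inv_mul_eq_div]
    have hrat : (1/σ - 1/v) / (1/v) = (v - σ) / σ := by
      field_simp
    calc (⨆ x : ℝ, |stdNormalCDF (x / σ) - stdNormalCDF (x / v)|)
        = ⨆ x : ℝ, |stdNormalCDF ((1/σ) * x) - stdNormalCDF ((1/v) * x)| := by
          congr 1; funext x; exact heq x
      _ ≤ (Real.sqrt (2 * Real.pi * Real.exp 1))⁻¹ * ((1/σ - 1/v) / (1/v)) := by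
          apply Real.iSup_le (fun x => pointwise (1/σ) (1/v) x (by positivity) h1)
          exact mul_nonneg (by positivity)
            (div_nonneg (by simp only [sub_nonneg]; exact h1.le) (by positivity))
      _ = (Real.sqrt (2 * Real.pi * Real.exp 1))⁻¹ * ((v - σ) / σ) := by rw [hrat]
end

section
/- Let H be a distribution function of a random variable bounded in absolute value by 2N (N > 0) and let Φ be the standard normal distribution function. Then the mean a = ∫ x dH(x) satisfies |a| ≤ 8N·‖H − Φ‖, where ‖·‖ is the Kolmogorov distance. -/
open Real MeasureTheory Set ProbabilityTheory

/-!
A law supported on `[-M, M]` with distribution function `F` has mean `M - ∫_{-M}^{M} F`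
(layer-cake formula applied to `M - x ≥ 0`, i.e. integration by parts). For the standard normal
distribution function, `Φ(t) + Φ(-t) = 1` gives `∫_{-M}^{M} Φ = M`. Hence the mean equals
`∫_{-M}^{M} (Φ - F)`, whose absolute value is at most `2M ‖F - Φ‖`; take `M = 2N`.
-/

lemma stdNormalCDF_eq_cdf_gaussianReal : stdNormalCDF = cdf (gaussianReal 0 1) := by
  have hdens : stdGaussianDensity = gaussianPDFReal 0 1 := by
    ext t
    simp [stdGaussianDensity, gaussianPDFReal]
  ext x
  rw [cdf_eq_real, measureReal_def, gaussianReal_apply_eq_integral 0 one_ne_zero,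
    ENNReal.toReal_ofReal (setIntegral_nonneg measurableSet_Iic fun t _ ↦
      gaussianPDFReal_nonneg 0 1 t), stdNormalCDF, hdens]

lemma le_of_measure_compl_Icc_eq_zero {μ : Measure ℝ} [NeZero μ] {a b : ℝ}
    (h : μ (Icc a b)ᶜ = 0) : a ≤ b := by
  by_contra hba
  rw [Icc_eq_empty hba, compl_empty, Measure.measure_univ_eq_zero] at h
  exact NeZero.ne μ h

lemma abs_cdf_sub_cdf_le_iSup (μ ν : Measure ℝ) (x : ℝ) :
    |cdf μ x - cdf ν x| ≤ ⨆ y, |cdf μ y - cdf ν y| := by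
  refine le_ciSup (f := fun y ↦ |cdf μ y - cdf ν y|) ⟨1, ?_⟩ x
  rintro _ ⟨y, rfl⟩
  rw [abs_sub_le_iff]
  constructor <;> linarith [cdf_nonneg μ y, cdf_le_one μ y, cdf_nonneg ν y, cdf_le_one ν y]

theorem integral_id_eq_sub_intervalIntegral_cdf (μ : Measure ℝ) [IsProbabilityMeasure μ]
    {a b : ℝ} (h : μ (Icc a b)ᶜ = 0) :
    ∫ x, x ∂μ = b - ∫ t in a..b, cdf μ t := by
  have hab := le_of_measure_compl_Icc_eq_zero h
  have hae : ∀ᵐ x ∂μ, x ∈ Icc a b := mem_ae_iff.mpr h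
  have hid : Integrable (fun x ↦ x) μ :=
    .of_bound aestronglyMeasurable_id (max |a| |b|) <|
      hae.mono fun x hx ↦ abs_le_max_abs_abs hx.1 hx.2
  have hint : Integrable (fun x ↦ b - x) μ := (integrable_const b).sub hid
  have hlevel (t : ℝ) : {x | t ≤ b - x} = Iic (b - t) := by
    ext x; simp only [mem_ofPred_eq, mem_Iic]; constructor <;> intro <;> linarith
  calc ∫ x, x ∂μ = b - ∫ x, (b - x) ∂μ := by
        rw [integral_sub (integrable_const b) hid, integral_const]; simp
    _ = b - ∫ t in Ioc 0 (b - a), cdf μ (b - t) := by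
        rw [hint.integral_eq_integral_Ioc_meas_le (M := b - a)
          (hae.mono fun x hx ↦ sub_nonneg.mpr hx.2) (hae.mono fun x hx ↦ sub_le_sub_left hx.1 b)]
        simp_rw [hlevel, cdf_eq_real]
    _ = b - ∫ t in a..b, cdf μ t := by
        rw [← intervalIntegral.integral_of_le (sub_nonneg.mpr hab),
          intervalIntegral.integral_comp_sub_left (cdf μ) b, sub_sub_cancel, sub_zero]

section Symmetric

variable {ν : Measure ℝ} [IsProbabilityMeasure ν] [NullSingletonClass ν]

lemma cdf_add_cdf_neg_of_map_neg_eq (hν : ν.map (fun x ↦ -x) = ν) (x : ℝ) :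
    cdf ν x + cdf ν (-x) = 1 := by
  have hneg : cdf ν (-x) = ν.real (Iic x)ᶜ := calc
    cdf ν (-x) = (ν.map (fun y ↦ -y)).real (Iic (-x)) := by rw [hν, cdf_eq_real]
    _ = ν.real (Ici x) := by
      rw [map_measureReal_apply measurable_neg measurableSet_Iic]
      congr 1; ext y; simp
    _ = ν.real (Iic x)ᶜ := by rw [compl_Iic]; exact measureReal_congr Ioi_ae_eq_Ici.symm
  rw [hneg, cdf_eq_real, measureReal_add_measureReal_compl measurableSet_Iic, probReal_univ]

lemma intervalIntegral_cdf_of_map_neg_eq (hν : ν.map (fun x ↦ -x) = ν) (M : ℝ) :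
    ∫ t in -M..M, cdf ν t = M := by
  have hint : IntervalIntegrable (cdf ν) volume (-M) M := (monotone_cdf ν).intervalIntegrable
  have hint_neg : IntervalIntegrable (fun t ↦ cdf ν (-t)) volume (-M) M :=
    ((monotone_cdf ν).comp_antitone fun _ _ ↦ neg_le_neg).intervalIntegrable
  have hreflect : ∫ t in -M..M, cdf ν (-t) = ∫ t in -M..M, cdf ν t := by
    rw [intervalIntegral.integral_comp_neg, neg_neg]
  have hsum : ∫ t in -M..M, (cdf ν t + cdf ν (-t)) = 2 * M := by
    simp only [cdf_add_cdf_neg_of_map_neg_eq hν, intervalIntegral.integral_const, smul_eq_mul]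
    ring
  rw [intervalIntegral.integral_add hint hint_neg, hreflect] at hsum
  linarith

end Symmetric

theorem abs_integral_id_le_of_map_neg_eq (μ ν : Measure ℝ) [IsProbabilityMeasure μ]
    [IsProbabilityMeasure ν] [NullSingletonClass ν] (hν : ν.map (fun x ↦ -x) = ν) {M : ℝ}
    (hM : 0 ≤ M) (hμ : μ (Icc (-M) M)ᶜ = 0) :
    |∫ x, x ∂μ| ≤ 2 * M * ⨆ y, |cdf μ y - cdf ν y| := by
  have hdiff : ∫ x, x ∂μ = ∫ t in -M..M, (cdf ν t - cdf μ t) := by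
    rw [integral_id_eq_sub_intervalIntegral_cdf μ hμ, intervalIntegral.integral_sub
      (monotone_cdf ν).intervalIntegrable (monotone_cdf μ).intervalIntegrable,
      intervalIntegral_cdf_of_map_neg_eq hν]
  calc |∫ x, x ∂μ| ≤ (⨆ y, |cdf μ y - cdf ν y|) * |M - -M| := by
        rw [hdiff, ← Real.norm_eq_abs]
        refine intervalIntegral.norm_integral_le_of_norm_le_const fun t _ ↦ ?_
        rw [Real.norm_eq_abs, abs_sub_comm]
        exact abs_cdf_sub_cdf_le_iSup μ ν t
    _ = 2 * M * ⨆ y, |cdf μ y - cdf ν y| := by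
        rw [sub_neg_eq_add, abs_of_nonneg (by linarith)]; ring

theorem stmt_5 (μ : Measure ℝ) [IsProbabilityMeasure μ] (N : ℝ) (hN : 0 < N)
    (hsupp : μ (Set.Icc (-(2 * N)) (2 * N))ᶜ = 0) :
    |∫ x, x ∂μ| ≤ 8 * N * (⨆ x : ℝ, |cdf μ x - stdNormalCDF x|) := by
  rw [stdNormalCDF_eq_cdf_gaussianReal]
  have : NullSingletonClass (gaussianReal 0 1) := nullSingletonClass_gaussianReal one_ne_zero
  have hsymm : (gaussianReal 0 1).map (fun x ↦ -x) = gaussianReal 0 1 := by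
    rw [gaussianReal_map_neg, neg_zero]
  have hdist_nonneg : 0 ≤ ⨆ x, |cdf μ x - cdf (gaussianReal 0 1) x| :=
    (abs_nonneg _).trans (abs_cdf_sub_cdf_le_iSup μ _ 0)
  calc |∫ x, x ∂μ| ≤ 2 * (2 * N) * ⨆ x, |cdf μ x - cdf (gaussianReal 0 1) x| :=
        abs_integral_id_le_of_map_neg_eq μ _ hsymm (by positivity) hsupp
    _ ≤ 8 * N * ⨆ x, |cdf μ x - cdf (gaussianReal 0 1) x| := by
        gcongr ?_ * _
        linarith
end

section
/- If X is a random variable with E X = 0, Var(X) = 1, density p, and finite entropic distance D(X) to the standard normal, then for all T ≥ 2, ∫_{|x| ≥ T} x² p(x) dx ≤ T² D(X) + 6 T e^{−T²/2}. -/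
open Real MeasureTheory Set

/-- Entropic distance (relative entropy) of a density `p` to the standard normal. -/
noncomputable def entDist (p : ℝ → ℝ) : ℝ :=
  ∫ x, p x * Real.log (p x / stdGaussianDensity x)

/-! The Young inequality `a c ≤ a log (a / b) - a + b eᶜ` with `a = p x`, `b = φ x`,
`c = x² / T²`, integrated over the tail `A = {T ≤ |x|}`, gives
`∫_A x² p ≤ T² (∫_A p log (p / φ) - ∫_A p + ∫_A φ e^{x²/T²})`.
Its case `c = 0` says `p log (p / φ) ≥ p - φ`, so the part of `D(X)` carried by the complement of
`A` is at least `∫_A φ - ∫_A p`, and the first two terms are at most `D(X)`. Since `T ≥ 2`,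
`φ e^{x²/T²}` is a multiple of a centred Gaussian of variance at most `2`, and the Mills-ratio
bound `∫_T^∞ e^{-b x²} ≤ e^{-b T²} / (2 b T)` bounds its tail by `6 e^{-T²/2} / T`. -/

theorem Real.mul_le_mul_log_div_sub_add_mul_exp {a b : ℝ} (c : ℝ) (ha : 0 ≤ a) (hb : 0 < b) :
    a * c ≤ a * log (a / b) - a + b * exp c := by
  rcases ha.eq_or_lt with rfl | ha
  · simpa using (mul_pos hb (exp_pos c)).le
  have hab : 0 < a / b := div_pos ha hb
  have hlin : c - log (a / b) + 1 ≤ b * exp c / a := by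
    calc c - log (a / b) + 1 ≤ exp (c - log (a / b)) := add_one_le_exp _
      _ = b * exp c / a := by rw [exp_sub, exp_log hab]; field_simp
  have := mul_le_mul_of_nonneg_left hlin ha.le
  rw [mul_div_cancel₀ _ ha.ne'] at this
  linarith

section RelativeEntropy

variable {α : Type*} [MeasurableSpace α] {μ : Measure α} {p q : α → ℝ} {s : Set α}

theorem setIntegral_mul_log_div_sub_le (hp0 : ∀ x, 0 ≤ p x) (hq0 : ∀ x, 0 < q x)
    (hp : Integrable p μ) (hq : Integrable q μ)
    (hpq : Integrable (fun x => p x * log (p x / q x)) μ)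
    (hmass : ∫ x, p x ∂μ = ∫ x, q x ∂μ) (hs : MeasurableSet s) :
    ∫ x in s, p x * log (p x / q x) ∂μ - ∫ x in s, p x ∂μ
      ≤ ∫ x, p x * log (p x / q x) ∂μ - ∫ x in s, q x ∂μ := by
  have hcompl : ∫ x in sᶜ, (p x - q x) ∂μ ≤ ∫ x in sᶜ, p x * log (p x / q x) ∂μ :=
    setIntegral_mono_on (hp.sub hq).integrableOn hpq.integrableOn hs.compl fun x _ => by
      have h := mul_le_mul_log_div_sub_add_mul_exp 0 (hp0 x) (hq0 x)
      rw [mul_zero, exp_zero, mul_one] at h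
      linarith
  rw [integral_sub hp.integrableOn hq.integrableOn] at hcompl
  have := integral_add_compl hs hp
  have := integral_add_compl hs hq
  have := integral_add_compl hs hpq
  linarith

theorem setIntegral_mul_le_mul_setIntegral_mul_log_div {g : α → ℝ} {t : ℝ} (ht : 0 < t)
    (hp0 : ∀ x, 0 ≤ p x) (hq0 : ∀ x, 0 < q x) (hgp : Integrable (fun x => g x * p x) μ)
    (hp : Integrable p μ) (hpq : Integrable (fun x => p x * log (p x / q x)) μ)
    (hqg : Integrable (fun x => q x * exp (t⁻¹ * g x)) μ) (hs : MeasurableSet s) :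
    ∫ x in s, g x * p x ∂μ ≤ t * ((∫ x in s, p x * log (p x / q x) ∂μ) - (∫ x in s, p x ∂μ)
      + ∫ x in s, q x * exp (t⁻¹ * g x) ∂μ) := by
  have hyoung (x : α) :
      g x * p x ≤ t * (p x * log (p x / q x) - p x + q x * exp (t⁻¹ * g x)) := by
    calc g x * p x = t * (p x * (t⁻¹ * g x)) := by field_simp
      _ ≤ _ := by
        gcongr
        exact mul_le_mul_log_div_sub_add_mul_exp _ (hp0 x) (hq0 x)
  calc ∫ x in s, g x * p x ∂μ
      ≤ ∫ x in s, t * (p x * log (p x / q x) - p x + q x * exp (t⁻¹ * g x)) ∂μ :=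
        setIntegral_mono_on hgp.integrableOn (((hpq.sub hp).add hqg).const_mul _).integrableOn hs
          fun x _ => hyoung x
    _ = _ := by
        rw [integral_const_mul, integral_add _ hqg.integrableOn,
          integral_sub hpq.integrableOn hp.integrableOn]
        exact (hpq.sub hp).integrableOn

end RelativeEntropy

section GaussianTail

theorem integral_Ioi_mul_exp_neg_mul_sq {b : ℝ} (hb : 0 < b) (T : ℝ) :
    ∫ x in Ioi T, x * exp (-b * x ^ 2) = exp (-b * T ^ 2) / (2 * b) := by
  have hderiv : ∀ x ∈ Ici T, HasDerivAt (fun x => -exp (-b * x ^ 2) / (2 * b))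
      (x * exp (-b * x ^ 2)) x := by
    intro x _
    refine ((((hasDerivAt_pow 2 x).const_mul (-b)).exp.neg).div_const (2 * b)).congr_deriv ?_
    field_simp
    ring
  have hlim : Filter.Tendsto (fun x => -exp (-b * x ^ 2) / (2 * b)) Filter.atTop (nhds 0) := by
    have h := tendsto_exp_atBot.comp <|
      (Filter.tendsto_pow_atTop two_ne_zero).const_mul_atTop_of_neg (neg_neg_iff_pos.2 hb)
    simpa using h.neg.div_const (2 * b)
  rw [integral_Ioi_of_hasDerivAt_of_tendsto' hderiv
    (integrable_mul_exp_neg_mul_sq hb).integrableOn hlim]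
  ring

theorem integral_Ioi_exp_neg_mul_sq_le {b T : ℝ} (hb : 0 < b) (hT : 0 < T) :
    ∫ x in Ioi T, exp (-b * x ^ 2) ≤ exp (-b * T ^ 2) / (2 * b * T) := by
  calc ∫ x in Ioi T, exp (-b * x ^ 2) ≤ ∫ x in Ioi T, T⁻¹ * (x * exp (-b * x ^ 2)) := by
        refine setIntegral_mono_on (integrable_exp_neg_mul_sq hb).integrableOn
          ((integrable_mul_exp_neg_mul_sq hb).const_mul _).integrableOn measurableSet_Ioi
          fun x (hx : T < x) => ?_
        rw [← mul_assoc]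
        exact le_mul_of_one_le_left (exp_pos _).le
          ((one_le_inv_mul₀ hT).2 hx.le)
    _ = exp (-b * T ^ 2) / (2 * b * T) := by
        rw [integral_const_mul, integral_Ioi_mul_exp_neg_mul_sq hb]
        field_simp

theorem setIntegral_abs_ge_eq_two_mul_integral_Ioi {f : ℝ → ℝ} (hf : Function.Even f)
    (hfi : Integrable f) {T : ℝ} (hT : 0 < T) :
    ∫ x in {x : ℝ | T ≤ |x|}, f x = 2 * ∫ x in Ioi T, f x := by
  have hsplit : {x : ℝ | T ≤ |x|} = Iic (-T) ∪ Ici T := by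
    ext x
    simp only [mem_ofPred_eq, mem_union, mem_Iic, mem_Ici, le_abs, le_neg, or_comm]
  have hneg : ∫ x in Iic (-T), f x = ∫ x in Ioi T, f x := by
    rw [← integral_comp_neg_Ioi]
    congr with x
    exact hf x
  rw [hsplit, setIntegral_union (Iic_disjoint_Ici.2 (by linarith)) measurableSet_Ici
    hfi.integrableOn hfi.integrableOn, hneg, integral_Ici_eq_integral_Ioi, two_mul]

end GaussianTail

section StdGaussianDensity

local notation "φ" => stdGaussianDensity

theorem stdGaussianDensity_pos (x : ℝ) : 0 < φ x := by
  unfold stdGaussianDensity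
  positivity

theorem stdGaussianDensity_mul_exp (c x : ℝ) :
    φ x * exp (c * x ^ 2) = (√(2 * π))⁻¹ * exp (-(1 / 2 - c) * x ^ 2) := by
  rw [stdGaussianDensity, mul_assoc, ← exp_add]
  ring_nf

theorem integrable_stdGaussianDensity_mul_exp {c : ℝ} (hc : c < 1 / 2) :
    Integrable fun x => φ x * exp (c * x ^ 2) := by
  simp only [stdGaussianDensity_mul_exp]
  exact (integrable_exp_neg_mul_sq (by linarith)).const_mul _

theorem integrable_stdGaussianDensity : Integrable φ := by
  simpa using integrable_stdGaussianDensity_mul_exp (c := 0) (by norm_num)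

theorem integral_stdGaussianDensity : ∫ x, φ x = 1 := by
  have h (x : ℝ) : φ x = (√(2 * π))⁻¹ * exp (-(1 / 2) * x ^ 2) := by
    simpa using stdGaussianDensity_mul_exp 0 x
  simp only [h, integral_const_mul, integral_gaussian]
  rw [show π / (1 / 2) = 2 * π by ring]
  exact inv_mul_cancel₀ (by positivity)

theorem setIntegral_abs_ge_stdGaussianDensity_mul_exp_le {c T : ℝ} (hc : c < 1 / 2) (hT : 0 < T) :
    ∫ x in {x : ℝ | T ≤ |x|}, φ x * exp (c * x ^ 2)
      ≤ 2 * (√(2 * π))⁻¹ * (exp (-(1 / 2 - c) * T ^ 2) / (2 * (1 / 2 - c) * T)) := by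
  have heven : Function.Even fun x => φ x * exp (c * x ^ 2) := fun x => by
    simp only [stdGaussianDensity, neg_sq]
  rw [setIntegral_abs_ge_eq_two_mul_integral_Ioi heven
    (integrable_stdGaussianDensity_mul_exp hc) hT]
  simp only [stdGaussianDensity_mul_exp, integral_const_mul, ← mul_assoc]
  gcongr
  exact integral_Ioi_exp_neg_mul_sq_le (by linarith) hT

theorem inv_sq_le_one_div_four {T : ℝ} (hT : 2 ≤ T) : (T ^ 2)⁻¹ ≤ 1 / 4 := by
  rw [one_div]
  gcongr
  nlinarith

theorem setIntegral_abs_ge_stdGaussianDensity_mul_exp_inv_sq_le {T : ℝ} (hT : 2 ≤ T) :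
    ∫ x in {x : ℝ | T ≤ |x|}, φ x * exp ((T ^ 2)⁻¹ * x ^ 2) ≤ 6 / T * exp (-T ^ 2 / 2) := by
  have hT0 : 0 < T := by linarith
  have hb : 1 / 4 ≤ 1 / 2 - (T ^ 2)⁻¹ := by linarith [inv_sq_le_one_div_four hT]
  have hexp : exp (-(1 / 2 - (T ^ 2)⁻¹) * T ^ 2) = exp 1 * exp (-T ^ 2 / 2) := by
    rw [← exp_add]
    congr 1
    field_simp
    ring
  have hsqrt : 2 ≤ √(2 * π) :=
    le_sqrt_of_sq_le (by nlinarith [pi_gt_three])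
  have he : exp 1 ≤ 3 := by linarith [exp_one_lt_d9]
  calc _ ≤ 2 * (√(2 * π))⁻¹ * (exp (-(1 / 2 - (T ^ 2)⁻¹) * T ^ 2)
          / (2 * (1 / 2 - (T ^ 2)⁻¹) * T)) :=
        setIntegral_abs_ge_stdGaussianDensity_mul_exp_le (by linarith) hT0
    _ ≤ 2 * 2⁻¹ * (3 * exp (-T ^ 2 / 2) / (2 * (1 / 4) * T)) := by
        rw [hexp]
        gcongr
    _ = 6 / T * exp (-T ^ 2 / 2) := by
        field_simp
        ring

end StdGaussianDensity

theorem stmt_11_general (p : ℝ → ℝ) (hp0 : ∀ x, 0 ≤ p x)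
    (hp1 : ∫ x, p x = 1)
    (hmom : Integrable (fun x => x ^ 2 * p x))
    (hD : Integrable (fun x => p x * Real.log (p x / stdGaussianDensity x)))
    (T : ℝ) (hT : 2 ≤ T) :
    ∫ x in {x : ℝ | T ≤ |x|}, x ^ 2 * p x
      ≤ T ^ 2 * entDist p + 6 * T * Real.exp (-T ^ 2 / 2) := by
  have hA : MeasurableSet {x : ℝ | T ≤ |x|} := measurableSet_le measurable_const measurable_abs
  have hp : Integrable p := .of_integral_ne_zero (by rw [hp1]; exact one_ne_zero)
  have hc : (T ^ 2)⁻¹ < 1 / 2 := by linarith [inv_sq_le_one_div_four hT]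
  have hyoung := setIntegral_mul_le_mul_setIntegral_mul_log_div (by positivity) hp0
    stdGaussianDensity_pos hmom hp hD (integrable_stdGaussianDensity_mul_exp hc) hA
  have hent := setIntegral_mul_log_div_sub_le hp0 stdGaussianDensity_pos hp
    integrable_stdGaussianDensity hD (by rw [hp1, integral_stdGaussianDensity]) hA
  have hφA : 0 ≤ ∫ x in {x : ℝ | T ≤ |x|}, stdGaussianDensity x :=
    setIntegral_nonneg hA fun x _ => (stdGaussianDensity_pos x).le
  have htail := setIntegral_abs_ge_stdGaussianDensity_mul_exp_inv_sq_le hT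
  calc _ ≤ _ := hyoung
    _ ≤ T ^ 2 * (entDist p + 6 / T * exp (-T ^ 2 / 2)) := by
        gcongr
        rw [entDist]
        linarith
    _ = T ^ 2 * entDist p + 6 * T * Real.exp (-T ^ 2 / 2) := by
        field_simp

theorem stmt_11 (p : ℝ → ℝ) (hmeas : Measurable p) (hp0 : ∀ x, 0 ≤ p x)
    (hp1 : ∫ x, p x = 1)
    (hmean : ∫ x, x * p x = 0) (hmom : Integrable (fun x => x ^ 2 * p x))
    (hvar : ∫ x, x ^ 2 * p x = 1)
    (hD : Integrable (fun x => p x * Real.log (p x / stdGaussianDensity x)))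
    (T : ℝ) (hT : 2 ≤ T) :
    ∫ x in {x : ℝ | T ≤ |x|}, x ^ 2 * p x
      ≤ T ^ 2 * entDist p + 6 * T * Real.exp (-T ^ 2 / 2) :=
  stmt_11_general p hp0 hp1 hmom hD T hT
end

section
/- Let X and Y be independent random variables with mean zero and Var(X+Y) = 1/2, and let Var(Y) ≤ 1/2. Then for all T ≥ 3, E[(X+Y)² 1_{|X+Y| ≥ T}] ≥ (1/4) E[X² 1_{|X| ≥ T+1}]. -/
/-!
With probability at least `1/2` (Chebyshev, since `E Y = 0` and `Var Y ≤ 1/2`) we have `|Y| < 1`,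
and by independence this event costs at most a factor `2` in `E[X² 1_{|X| ≥ T+1}]`. On it,
`|X + Y| ≥ |X| - 1 ≥ T` and `(X + Y)² ≥ (|X| - 1)² ≥ X²/2` because `|X| ≥ 4`.
-/

open Real MeasureTheory Set ProbabilityTheory

namespace ProbabilityTheory

variable {Ω : Type*} [MeasurableSpace Ω] {μ : Measure Ω}

lemma one_sub_variance_div_sq_le_measureReal_abs_sub_lt [IsProbabilityMeasure μ] {Y : Ω → ℝ}
    (hY : MemLp Y 2 μ) {c : ℝ} (hc : 0 < c) :
    1 - variance Y μ / c ^ 2 ≤ μ.real {ω | |Y ω - μ[Y]| < c} := by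
  have hcompl : {ω | |Y ω - μ[Y]| < c}ᶜ = {ω | c ≤ |Y ω - μ[Y]|} := by
    ext ω; simp
  have htail : μ.real {ω | c ≤ |Y ω - μ[Y]|} ≤ variance Y μ / c ^ 2 :=
    ENNReal.toReal_le_of_le_ofReal (div_nonneg (variance_nonneg Y μ) (sq_nonneg c))
      (meas_ge_le_variance_div_sq hY hc)
  have hcover := measureReal_union_le (μ := μ) {ω | |Y ω - μ[Y]| < c} {ω | |Y ω - μ[Y]| < c}ᶜ
  rw [union_compl_self, probReal_univ, hcompl] at hcover
  linarith

lemma IndepFun.setIntegral_preimage_inter_preimage {𝓧 𝓨 : Type*} [MeasurableSpace 𝓧]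
    [MeasurableSpace 𝓨] {X : Ω → 𝓧} {Y : Ω → 𝓨} (hXY : IndepFun X Y μ) (hX : Measurable X)
    (hY : Measurable Y) {s : Set 𝓧} {t : Set 𝓨} (hs : MeasurableSet s) (ht : MeasurableSet t)
    {φ : 𝓧 → ℝ} (hφ : Measurable φ) :
    ∫ ω in X ⁻¹' s ∩ Y ⁻¹' t, φ (X ω) ∂μ = (∫ ω in X ⁻¹' s, φ (X ω) ∂μ) * μ.real (Y ⁻¹' t) := by
  have h := hXY.integral_fun_comp_mul_comp hX.aemeasurable hY.aemeasurable
    (hφ.indicator hs).aestronglyMeasurable (measurable_const.indicator ht).aestronglyMeasurable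
    (f := s.indicator φ) (g := t.indicator 1)
  simp_rw [← indicator_comp_right, ← inter_indicator_mul] at h
  simp only [Function.comp_def, Pi.one_apply, mul_one] at h
  rw [← integral_indicator ((hX hs).inter (hY ht)), ← integral_indicator (hX hs),
    ← integral_indicator_one (hY ht)]
  exact h

end ProbabilityTheory

lemma sq_le_two_mul_add_sq {x y : ℝ} (hx : 4 ≤ |x|) (hy : |y| ≤ 1) : x ^ 2 ≤ 2 * (x + y) ^ 2 := by
  have hxy : |x| - |y| ≤ |x + y| := abs_sub_abs_le_abs_add x y
  calc x ^ 2 = |x| ^ 2 := (sq_abs x).symm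
    _ ≤ 2 * (|x| - 1) ^ 2 := by nlinarith
    _ ≤ 2 * |x + y| ^ 2 := by gcongr <;> linarith
    _ = 2 * (x + y) ^ 2 := by rw [sq_abs]

theorem stmt_13_general {Ω : Type*} [MeasurableSpace Ω] (μ : Measure Ω) [IsProbabilityMeasure μ]
    (X Y : Ω → ℝ) (hXm : Measurable X) (hYm : Measurable Y)
    (hindep : IndepFun X Y μ)
    (hX2 : Integrable (fun ω => (X ω) ^ 2) μ) (hY2 : Integrable (fun ω => (Y ω) ^ 2) μ)
    (hYmean : ∫ ω, Y ω ∂μ = 0)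
    (hvarY : variance Y μ ≤ 1 / 2)
    (T : ℝ) (hT : 3 ≤ T) :
    (1 / 4) * ∫ ω in {ω | T + 1 ≤ |X ω|}, (X ω) ^ 2 ∂μ
      ≤ ∫ ω in {ω | T ≤ |X ω + Y ω|}, (X ω + Y ω) ^ 2 ∂μ := by
  set A : Set ℝ := {x | T + 1 ≤ |x|}
  set B : Set ℝ := {y | |y| < 1}
  have hA : MeasurableSet A := measurableSet_le measurable_const measurable_abs
  have hB : MeasurableSet B := measurableSet_lt measurable_abs measurable_const
  have hXL : MemLp X 2 μ := (memLp_two_iff_integrable_sq hXm.aestronglyMeasurable).2 hX2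
  have hYL : MemLp Y 2 μ := (memLp_two_iff_integrable_sq hYm.aestronglyMeasurable).2 hY2
  have hsum2 : Integrable (fun ω => (X ω + Y ω) ^ 2) μ :=
    (memLp_two_iff_integrable_sq (hXm.add hYm).aestronglyMeasurable).1 (hXL.add hYL)
  have hYB : 1 / 2 ≤ μ.real (Y ⁻¹' B) := by
    have h := one_sub_variance_div_sq_le_measureReal_abs_sub_lt hYL one_pos
    simp only [hYmean, sub_zero, one_pow, div_one] at h
    exact le_trans (by linarith) h
  have hXA : 0 ≤ ∫ ω in X ⁻¹' A, X ω ^ 2 ∂μ := setIntegral_nonneg (hXm hA) fun ω _ => sq_nonneg _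
  calc (1 / 4) * ∫ ω in X ⁻¹' A, X ω ^ 2 ∂μ
      ≤ (1 / 2) * ((∫ ω in X ⁻¹' A, X ω ^ 2 ∂μ) * μ.real (Y ⁻¹' B)) := by nlinarith
    _ = ∫ ω in X ⁻¹' A ∩ Y ⁻¹' B, X ω ^ 2 / 2 ∂μ := by
      rw [integral_div, hindep.setIntegral_preimage_inter_preimage hXm hYm hA hB
        (φ := fun x => x ^ 2) (by fun_prop)]
      ring
    _ ≤ ∫ ω in X ⁻¹' A ∩ Y ⁻¹' B, (X ω + Y ω) ^ 2 ∂μ := by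
      refine setIntegral_mono_on (hX2.div_const 2).integrableOn hsum2.integrableOn
        ((hXm hA).inter (hYm hB)) ?_
      rintro ω ⟨hωA : T + 1 ≤ |X ω|, hωB : |Y ω| < 1⟩
      linarith [sq_le_two_mul_add_sq (by linarith : 4 ≤ |X ω|) hωB.le]
    _ ≤ ∫ ω in {ω | T ≤ |X ω + Y ω|}, (X ω + Y ω) ^ 2 ∂μ := by
      refine setIntegral_mono_set hsum2.integrableOn (.of_forall fun ω => sq_nonneg _)
        (LE.le.eventuallyLE ?_)
      rintro ω ⟨hωA : T + 1 ≤ |X ω|, hωB : |Y ω| < 1⟩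
      show T ≤ |X ω + Y ω|
      linarith [abs_sub_abs_le_abs_add (X ω) (Y ω)]

theorem stmt_13 {Ω : Type*} [MeasurableSpace Ω] (μ : Measure Ω) [IsProbabilityMeasure μ]
    (X Y : Ω → ℝ) (hXm : Measurable X) (hYm : Measurable Y)
    (hindep : IndepFun X Y μ)
    (hXint : Integrable X μ) (hYint : Integrable Y μ)
    (hX2 : Integrable (fun ω => (X ω) ^ 2) μ) (hY2 : Integrable (fun ω => (Y ω) ^ 2) μ)
    (hXmean : ∫ ω, X ω ∂μ = 0) (hYmean : ∫ ω, Y ω ∂μ = 0)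
    (hvarSum : variance (fun ω => X ω + Y ω) μ = 1 / 2)
    (hvarY : variance Y μ ≤ 1 / 2)
    (T : ℝ) (hT : 3 ≤ T) :
    (1 / 4) * ∫ ω in {ω | T + 1 ≤ |X ω|}, (X ω) ^ 2 ∂μ
      ≤ ∫ ω in {ω | T ≤ |X ω + Y ω|}, (X ω + Y ω) ^ 2 ∂μ :=
  stmt_13_general μ X Y hXm hYm hindep hX2 hY2 hYmean hvarY T hT
end

section
/- If ∫ x² dF(x) ≤ B² and ∫ x² dG(x) ≤ B² (B ≥ 0), then W₁(F,G) ≤ 2 L(F,G) + 4 B √(L(F,G)), and W₁(F,G) ≤ 4 B √(‖F−G‖), where ‖·‖ is the Kolmogorov distance. -/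
open Real MeasureTheory Set ProbabilityTheory

/-- Lévy distance between two distribution functions. -/
noncomputable def levyDist (F G : ℝ → ℝ) : ℝ :=
  sInf {h : ℝ | 0 ≤ h ∧ ∀ x : ℝ, G (x - h) - h ≤ F x ∧ F x ≤ G (x + h) + h}

/-!
If `|F - G| ≤ c + (G(x + h) - G(x - h))` everywhere (with `h = c` any number above the Lévy
distance, or `h = 0` and `c = ‖F - G‖`), then the integral over `[-T, T]` is at most
`2Tc + 2h`, since `∫ (G(x + h) - G(x - h)) dx` telescopes to two windows of width `2h`.
Outside `[-T, T]`, Chebyshev gives `|F - G| ≤ B²/x²`, contributing `2B²/T`.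
Optimising `2Tc + 2B²/T` over `T` yields `4B√c`.
-/

section InverseSquareTail

variable {T : ℝ}

lemma rpow_neg_two_eqOn_inv_sq (hT : 0 < T) :
    EqOn (fun x : ℝ => x ^ (-2 : ℝ)) (fun x => (x ^ 2)⁻¹) (Ioi T) := fun x hx => by
  simp [rpow_neg (hT.trans hx).le]

lemma integrableOn_Ioi_inv_sq (hT : 0 < T) : IntegrableOn (fun x : ℝ => (x ^ 2)⁻¹) (Ioi T) :=
  (integrableOn_Ioi_rpow_of_lt (by norm_num) hT).congr_fun (rpow_neg_two_eqOn_inv_sq hT)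
    measurableSet_Ioi

lemma integral_Ioi_inv_sq (hT : 0 < T) : ∫ x in Ioi T, (x ^ 2)⁻¹ = T⁻¹ := by
  rw [← setIntegral_congr_fun measurableSet_Ioi (rpow_neg_two_eqOn_inv_sq hT),
    integral_Ioi_rpow_of_lt (by norm_num) hT]
  norm_num [rpow_neg_one]

lemma integrableOn_compl_Ioc_inv_sq (hT : 0 < T) :
    IntegrableOn (fun x : ℝ => (x ^ 2)⁻¹) (Ioc (-T) T)ᶜ := by
  have hleft : IntegrableOn (fun x : ℝ => ((-x) ^ 2)⁻¹) (Iio (-T)) :=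
    (by simpa using integrableOn_Ioi_inv_sq hT : IntegrableOn _ (Ioi (-(-T)))).comp_neg_Iio
  rw [compl_Ioc, integrableOn_union, integrableOn_Iic_iff_integrableOn_Iio]
  exact ⟨by simpa using hleft, integrableOn_Ioi_inv_sq hT⟩

lemma integral_compl_Ioc_inv_sq (hT : 0 < T) :
    ∫ x in (Ioc (-T) T)ᶜ, (x ^ 2)⁻¹ = 2 / T := by
  have hleft : ∫ x in Iic (-T), (x ^ 2)⁻¹ = T⁻¹ := by
    rw [← integral_comp_neg_Ioi]
    simpa using integral_Ioi_inv_sq hT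
  have hint := integrableOn_compl_Ioc_inv_sq hT
  rw [compl_Ioc] at hint ⊢
  rw [setIntegral_union (Iic_disjoint_Ioi (by linarith)) measurableSet_Ioi
    (hint.mono_set subset_union_left) (hint.mono_set subset_union_right), hleft,
    integral_Ioi_inv_sq hT]
  ring

lemma integral_le_setIntegral_Ioc_add_of_abs_le {f : ℝ → ℝ} {M : ℝ} (hT : 0 < T)
    (hf : AEStronglyMeasurable f) (hf_mid : IntegrableOn f (Ioc (-T) T))
    (hf_tail : ∀ x, T ≤ |x| → |f x| ≤ M * (x ^ 2)⁻¹) :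
    ∫ x, f x ≤ (∫ x in Ioc (-T) T, f x) + 2 * M / T := by
  have htail : ∀ x ∈ (Ioc (-T) T)ᶜ, |f x| ≤ M * (x ^ 2)⁻¹ := fun x hx => by
    refine hf_tail x ?_
    simp only [mem_compl_iff, mem_Ioc, not_and_or, not_lt, not_le] at hx
    rcases hx with hx | hx <;> [rw [abs_of_neg (by linarith)]; rw [abs_of_pos (by linarith)]] <;>
      linarith
  have hmaj : IntegrableOn (fun x => M * (x ^ 2)⁻¹) (Ioc (-T) T)ᶜ :=
    (integrableOn_compl_Ioc_inv_sq hT).const_mul M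
  have hf_out : IntegrableOn f (Ioc (-T) T)ᶜ :=
    hmaj.mono' hf.restrict ((ae_restrict_iff' measurableSet_Ioc.compl).2 (ae_of_all _ htail))
  have hf_int : Integrable f := by
    simpa using hf_mid.union hf_out
  have hout : ∫ x in (Ioc (-T) T)ᶜ, f x ≤ 2 * M / T :=
    calc ∫ x in (Ioc (-T) T)ᶜ, f x ≤ ∫ x in (Ioc (-T) T)ᶜ, M * (x ^ 2)⁻¹ :=
          setIntegral_mono_on hf_out hmaj measurableSet_Ioc.compl fun x hx =>
            (le_abs_self _).trans (htail x hx)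
      _ = 2 * M / T := by rw [integral_const_mul, integral_compl_Ioc_inv_sq hT]; ring
  linarith [integral_add_compl (s := Ioc (-T) T) measurableSet_Ioc hf_int]

end InverseSquareTail

lemma measureReal_sq_le_sq_le_integral_div (μ : Measure ℝ) (hμ : Integrable (fun y : ℝ => y ^ 2) μ)
    {x : ℝ} (hx : x ≠ 0) :
    μ.real {y | x ^ 2 ≤ y ^ 2} ≤ (∫ y, y ^ 2 ∂μ) / x ^ 2 := by
  rw [le_div_iff₀ (by positivity), mul_comm]
  exact mul_meas_ge_le_integral_of_nonneg (ae_of_all _ fun y => sq_nonneg y) hμ _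

section Chebyshev

variable (μ : Measure ℝ) [IsProbabilityMeasure μ]

lemma cdf_le_of_neg (hμ : Integrable (fun y : ℝ => y ^ 2) μ) {x : ℝ} (hx : x < 0) :
    cdf μ x ≤ (∫ y, y ^ 2 ∂μ) / x ^ 2 := by
  refine (cdf_eq_real μ x).trans_le ((measureReal_mono fun y (hy : y ≤ x) => ?_).trans
    (measureReal_sq_le_sq_le_integral_div μ hμ hx.ne))
  show x ^ 2 ≤ y ^ 2
  nlinarith

lemma one_sub_cdf_le_of_pos (hμ : Integrable (fun y : ℝ => y ^ 2) μ) {x : ℝ} (hx : 0 < x) :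
    1 - cdf μ x ≤ (∫ y, y ^ 2 ∂μ) / x ^ 2 := by
  rw [cdf_eq_real, ← probReal_compl_eq_one_sub measurableSet_Iic, compl_Iic]
  refine (measureReal_mono fun y (hy : x < y) => ?_).trans
    (measureReal_sq_le_sq_le_integral_div μ hμ hx.ne')
  show x ^ 2 ≤ y ^ 2
  nlinarith

end Chebyshev

lemma abs_cdf_sub_cdf_le (μ ν : Measure ℝ) [IsProbabilityMeasure μ] [IsProbabilityMeasure ν]
    {B : ℝ} (hμ2 : ∫ y, y ^ 2 ∂μ ≤ B ^ 2) (hν2 : ∫ y, y ^ 2 ∂ν ≤ B ^ 2)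
    (hμ : Integrable (fun y : ℝ => y ^ 2) μ) (hν : Integrable (fun y : ℝ => y ^ 2) ν)
    {x : ℝ} (hx : x ≠ 0) : |cdf μ x - cdf ν x| ≤ B ^ 2 * (x ^ 2)⁻¹ := by
  have hμB : (∫ y, y ^ 2 ∂μ) / x ^ 2 ≤ B ^ 2 * (x ^ 2)⁻¹ := by
    rw [← div_eq_mul_inv]; gcongr
  have hνB : (∫ y, y ^ 2 ∂ν) / x ^ 2 ≤ B ^ 2 * (x ^ 2)⁻¹ := by
    rw [← div_eq_mul_inv]; gcongr
  rw [abs_sub_le_iff]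
  rcases hx.lt_or_gt with hx | hx
  · have := cdf_le_of_neg μ hμ hx
    have := cdf_le_of_neg ν hν hx
    constructor <;> linarith [cdf_nonneg μ x, cdf_nonneg ν x]
  · have := one_sub_cdf_le_of_pos μ hμ hx
    have := one_sub_cdf_le_of_pos ν hν hx
    constructor <;> linarith [cdf_le_one μ x, cdf_le_one ν x]

lemma intervalIntegral_sub_shift_le {G : ℝ → ℝ} (hG : Monotone G) (hG01 : ∀ x, G x ∈ Icc 0 1)
    (a b : ℝ) {h : ℝ} (hh : 0 ≤ h) :
    ∫ x in a..b, (G (x + h) - G (x - h)) ≤ 2 * h := by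
  have hGi : ∀ u v, IntervalIntegrable G volume u v := fun _ _ => hG.intervalIntegrable
  have hupper : ∫ x in (b - h)..(b + h), G x ≤ 2 * h := by
    calc ∫ x in (b - h)..(b + h), G x ≤ ∫ _ in (b - h)..(b + h), (1 : ℝ) :=
          intervalIntegral.integral_mono_on (by linarith) (hGi _ _) intervalIntegrable_const
            fun x _ => (hG01 x).2
      _ = 2 * h := by
          simp only [intervalIntegral.integral_const, smul_eq_mul, mul_one]; ring
  have hlower : 0 ≤ ∫ x in (a - h)..(a + h), G x :=
    intervalIntegral.integral_nonneg (by linarith) fun x _ => (hG01 x).1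
  have hplus : Monotone fun x => G (x + h) := fun _ _ hxy => hG (by linarith)
  have hminus : Monotone fun x => G (x - h) := fun _ _ hxy => hG (by linarith)
  rw [intervalIntegral.integral_sub hplus.intervalIntegrable hminus.intervalIntegrable,
    intervalIntegral.integral_comp_add_right G, intervalIntegral.integral_comp_sub_right G,
    ← intervalIntegral.integral_add_adjacent_intervals (hGi (a + h) (b - h)) (hGi _ _),
    ← intervalIntegral.integral_add_adjacent_intervals (hGi (a - h) (a + h)) (hGi _ (b - h))]
  linarith

lemma le_two_mul_mul_sqrt_of_forall_le {a B c : ℝ} (hB : 0 ≤ B) (hc : 0 ≤ c)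
    (h : ∀ T > 0, a ≤ T * c + B ^ 2 / T) : a ≤ 2 * B * √c := by
  set s := √c
  have hs : 0 ≤ s := sqrt_nonneg c
  have hcs : c = s * s := (mul_self_sqrt hc).symm
  refine le_of_forall_pos_le_add fun ε hε => ?_
  -- with `T = (B + δ) / (s + δ)` both terms are within `δ (B + s)` of `B s`
  set δ := ε / (s + B + 1)
  have hδ : 0 < δ := by positivity
  have hδε : δ * (s + B) ≤ ε := by
    rw [div_mul_eq_mul_div, div_le_iff₀ (by positivity)]; nlinarith
  have hT : 0 < (B + δ) / (s + δ) := by positivity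
  have h1 : (B + δ) / (s + δ) * c ≤ (B + δ) * s := by
    rw [div_mul_eq_mul_div, div_le_iff₀ (by positivity), hcs]
    nlinarith [mul_nonneg (mul_nonneg (by positivity : 0 ≤ B + δ) hs) hδ.le]
  have h2 : B ^ 2 / ((B + δ) / (s + δ)) ≤ B * (s + δ) := by
    rw [div_div_eq_mul_div, div_le_iff₀ (by positivity)]
    nlinarith [mul_nonneg (mul_nonneg hB (by positivity : 0 ≤ s + δ)) hδ.le]
  linarith [h _ hT]

lemma abs_cdf_sub_cdf_le_one (μ ν : Measure ℝ) [IsProbabilityMeasure μ] [IsProbabilityMeasure ν]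
    (x : ℝ) : |cdf μ x - cdf ν x| ≤ 1 := by
  rw [abs_sub_le_iff]
  constructor <;> linarith [cdf_nonneg μ x, cdf_nonneg ν x, cdf_le_one μ x, cdf_le_one ν x]

section Window

variable (μ ν : Measure ℝ) [IsProbabilityMeasure μ] [IsProbabilityMeasure ν] {B h c : ℝ}
  (hμ2 : ∫ y, y ^ 2 ∂μ ≤ B ^ 2) (hν2 : ∫ y, y ^ 2 ∂ν ≤ B ^ 2)
  (hμ : Integrable (fun y : ℝ => y ^ 2) μ) (hν : Integrable (fun y : ℝ => y ^ 2) ν)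
  (hh : 0 ≤ h) (hpt : ∀ x, |cdf μ x - cdf ν x| ≤ c + (cdf ν (x + h) - cdf ν (x - h)))
include hμ2 hν2 hμ hν hh hpt

lemma integral_abs_cdf_sub_cdf_le_of_cutoff {T : ℝ} (hT : 0 < T) :
    ∫ x, |cdf μ x - cdf ν x| ≤ 2 * h + 2 * (T * c + B ^ 2 / T) := by
  have hmeas : Measurable fun x => |cdf μ x - cdf ν x| :=
    ((cdf μ).mono.measurable.sub (cdf ν).mono.measurable).abs
  have hmid_int : IntegrableOn (fun x => |cdf μ x - cdf ν x|) (Ioc (-T) T) :=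
    Measure.integrableOn_of_bounded measure_Ioc_lt_top.ne hmeas.aestronglyMeasurable
      (ae_of_all _ fun x => by simpa using abs_cdf_sub_cdf_le_one μ ν x)
  have hshift : IntervalIntegrable (fun x => cdf ν (x + h) - cdf ν (x - h)) volume (-T) T :=
    (Monotone.intervalIntegrable fun _ _ hxy => (cdf ν).mono (by linarith)).sub
      (Monotone.intervalIntegrable fun _ _ hxy => (cdf ν).mono (by linarith))
  have hmajor := (intervalIntegrable_const (c := c)).add hshift
  rw [intervalIntegrable_iff_integrableOn_Ioc_of_le (by linarith)] at hmajor
  have hmid : ∫ x in Ioc (-T) T, |cdf μ x - cdf ν x| ≤ 2 * T * c + 2 * h :=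
    calc ∫ x in Ioc (-T) T, |cdf μ x - cdf ν x|
        ≤ ∫ x in Ioc (-T) T, (c + (cdf ν (x + h) - cdf ν (x - h))) :=
          setIntegral_mono_on hmid_int hmajor measurableSet_Ioc fun x _ => hpt x
      _ = 2 * T * c + ∫ x in (-T)..T, (cdf ν (x + h) - cdf ν (x - h)) := by
          rw [← intervalIntegral.integral_of_le (by linarith),
            intervalIntegral.integral_add intervalIntegrable_const hshift]
          simp only [intervalIntegral.integral_const, smul_eq_mul]
          ring
      _ ≤ 2 * T * c + 2 * h := by
          gcongr
          exact intervalIntegral_sub_shift_le (cdf ν).mono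
            (fun x => ⟨cdf_nonneg ν x, cdf_le_one ν x⟩) _ _ hh
  have htail := integral_le_setIntegral_Ioc_add_of_abs_le hT hmeas.aestronglyMeasurable
    hmid_int fun x hx => by
      rw [abs_abs]
      exact abs_cdf_sub_cdf_le μ ν hμ2 hν2 hμ hν (abs_pos.1 (hT.trans_le hx))
  have : 2 * B ^ 2 / T = 2 * (B ^ 2 / T) := by ring
  linarith

lemma integral_abs_cdf_sub_cdf_le_of_forall_abs_le (hB : 0 ≤ B) (hc : 0 ≤ c) :
    ∫ x, |cdf μ x - cdf ν x| ≤ 2 * h + 4 * B * √c := by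
  have := le_two_mul_mul_sqrt_of_forall_le (a := ((∫ x, |cdf μ x - cdf ν x|) - 2 * h) / 2) hB hc
    fun T hT => by
      linarith [integral_abs_cdf_sub_cdf_le_of_cutoff μ ν hμ2 hν2 hμ hν hh hpt hT]
  linarith

end Window

lemma abs_sub_le_add_sub_of_levyDist_lt {F G : ℝ → ℝ} (hF : ∀ x, F x ∈ Icc (0 : ℝ) 1)
    (hG : ∀ x, G x ∈ Icc (0 : ℝ) 1) (hGm : Monotone G) {h : ℝ} (hh : levyDist F G < h) (x : ℝ) :
    |F x - G x| ≤ h + (G (x + h) - G (x - h)) := by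
  have hone : (1 : ℝ) ∈ {h : ℝ | 0 ≤ h ∧ ∀ x : ℝ, G (x - h) - h ≤ F x ∧ F x ≤ G (x + h) + h} :=
    ⟨zero_le_one, fun x => ⟨by linarith [(hG (x - 1)).2, (hF x).1],
      by linarith [(hG (x + 1)).1, (hF x).2]⟩⟩
  obtain ⟨h', ⟨hh'0, hh'⟩, hh'h⟩ := exists_lt_of_csInf_lt ⟨1, hone⟩ hh
  obtain ⟨hleft, hright⟩ := hh' x
  have := hGm (show x - h ≤ x - h' by linarith)
  have := hGm (show x - h ≤ x by linarith)
  have := hGm (show x ≤ x + h by linarith)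
  have := hGm (show x + h' ≤ x + h by linarith)
  rw [abs_sub_le_iff]
  constructor <;> linarith

theorem stmt_16 (μ ν : Measure ℝ) [IsProbabilityMeasure μ] [IsProbabilityMeasure ν]
    (B : ℝ) (hB : 0 ≤ B)
    (hμ2 : ∫ x, x ^ 2 ∂μ ≤ B ^ 2) (hν2 : ∫ x, x ^ 2 ∂ν ≤ B ^ 2)
    (hμint : Integrable (fun x : ℝ => x ^ 2) μ) (hνint : Integrable (fun x : ℝ => x ^ 2) ν) :
    (∫ x, |cdf μ x - cdf ν x|)
      ≤ 2 * levyDist (fun x => cdf μ x) (fun x => cdf ν x)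
        + 4 * B * Real.sqrt (levyDist (fun x => cdf μ x) (fun x => cdf ν x)) ∧
    (∫ x, |cdf μ x - cdf ν x|)
      ≤ 4 * B * Real.sqrt (⨆ x : ℝ, |cdf μ x - cdf ν x|) := by
  have hcdf : ∀ (ρ : Measure ℝ) [IsProbabilityMeasure ρ] (x : ℝ), cdf ρ x ∈ Icc (0 : ℝ) 1 :=
    fun ρ _ x => ⟨cdf_nonneg ρ x, cdf_le_one ρ x⟩
  constructor
  · set L := levyDist (fun x => cdf μ x) (fun x => cdf ν x)
    have hL : 0 ≤ L := Real.sInf_nonneg fun h hh => hh.1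
    have hbound : ∀ h ∈ Ioi L, ∫ x, |cdf μ x - cdf ν x| ≤ 2 * h + 4 * B * √h := fun h hh =>
      have hh0 : 0 ≤ h := hL.trans hh.le
      integral_abs_cdf_sub_cdf_le_of_forall_abs_le μ ν hμ2 hν2 hμint hνint hh0
        (abs_sub_le_add_sub_of_levyDist_lt (hcdf μ) (hcdf ν) (cdf ν).mono hh) hB hh0
    have hcont : ContinuousAt (fun t => 2 * t + 4 * B * √t) L := by fun_prop
    exact ge_of_tendsto (hcont.tendsto.mono_left nhdsWithin_le_nhds)
      (eventually_nhdsWithin_of_forall hbound)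
  · have hbdd : BddAbove (range fun x => |cdf μ x - cdf ν x|) :=
      ⟨1, forall_mem_range.2 (abs_cdf_sub_cdf_le_one μ ν)⟩
    have hK : ∀ x, |cdf μ x - cdf ν x| ≤ ⨆ x, |cdf μ x - cdf ν x| := le_ciSup hbdd
    simpa using integral_abs_cdf_sub_cdf_le_of_forall_abs_le μ ν hμ2 hν2 hμint hνint le_rfl
      (by simpa using hK) hB ((abs_nonneg _).trans (hK 0))
end
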